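/- There exists C > 0 such that for all z, w in the open unit ball of ℂⁿ with z ≠ 0, |Q_z(w)| ≤ C |φ_z(w)| · |1-⟨z,w⟩|^{1/2}. -/

import Mathlib

open MeasureTheory

variable {n : ℕ}

/-- The Hermitian inner product `⟨z,w⟩ = Σᵢ zᵢ ·conj wᵢ` (linear in the first slot). -/
noncomputable def hin (z w : EuclideanSpace ℂ (Fin n)) : ℂ :=
  ∑ i, z i * (starRingEnd ℂ) (w i)

/-- Orthogonal projection of `w` onto the complex line `ℂz`. -/
noncomputable def Pz (z w : EuclideanSpace ℂ (Fin n)) : EuclideanSpace ℂ (Fin n) :=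
  (hin w z / hin z z) • z

/-- Orthogonal projection of `w` onto the orthogonal complement of `ℂz`. -/
noncomputable def Qz (z w : EuclideanSpace ℂ (Fin n)) : EuclideanSpace ℂ (Fin n) :=
  w - Pz z w

open Classical in
/-- The Möbius transform `φ_z` of the unit ball of `ℂⁿ`. -/
noncomputable def mobius (z w : EuclideanSpace ℂ (Fin n)) : EuclideanSpace ℂ (Fin n) :=
  if z = 0 then -w
  else (1 - hin w z)⁻¹ • (z - Pz z w - (Real.sqrt (1 - ‖z‖ ^ 2) : ℂ) • Qz z w)

/-!
Write `A = z - P_z w` (a multiple of `z`), `Q = Q_z w`, `ε = 1 - |z|²` and `D = |1 - ⟨w,z⟩|`.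
Since `A ⊥ Q`, Pythagoras gives `|φ_z w|² D² = |A|² + ε |Q|²`, so it suffices to show
`|Q|² D ≤ 4 (|A|² + ε |Q|²)`. Two facts make this work: `|Q|² ≤ |w - z|² ≤ 2D` inside the ball,
and `1 - ⟨w,z⟩ = ε + ⟨A,z⟩` gives `D ≤ ε + |A|`. Splitting on whether `|A| ≤ ε` finishes.
-/

local notation "⟪" x ", " y "⟫" => @inner ℂ _ _ x y

lemma norm_sub_sq_eq_of_inner_eq_zero {𝕜 E : Type*} [RCLike 𝕜] [SeminormedAddCommGroup E]
    [InnerProductSpace 𝕜 E] {x y : E} (h : inner 𝕜 x y = 0) :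
    ‖x - y‖ ^ 2 = ‖x‖ ^ 2 + ‖y‖ ^ 2 := by
  simp [norm_sub_sq (𝕜 := 𝕜), h]

lemma sq_mul_le_four_mul_of_le_add {s t ε D : ℝ} (ht : 0 ≤ t) (hε : 0 ≤ ε)
    (hD : D ≤ ε + t) (hsD : s ^ 2 ≤ 2 * D) : s ^ 2 * D ≤ 4 * (t ^ 2 + ε * s ^ 2) := by
  have hst : s ^ 2 * t ≤ 4 * t ^ 2 + ε * s ^ 2 := by
    rcases le_total t ε with htε | hεt
    · nlinarith
    · -- here `s² ≤ 2 (ε + t) ≤ 4 t`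
      nlinarith
  nlinarith

section Mobius

variable (z w : EuclideanSpace ℂ (Fin n))

lemma hin_eq_inner : hin z w = ⟪w, z⟫ := by
  simp [hin, PiLp.inner_apply]

lemma norm_one_sub_hin_comm : ‖1 - hin z w‖ = ‖1 - hin w z‖ := by
  rw [← Complex.norm_conj, map_sub, map_one, hin_eq_inner, hin_eq_inner, inner_conj_symm]

lemma hin_self : hin z z = (‖z‖ ^ 2 : ℝ) := by
  rw [hin_eq_inner, inner_self_eq_norm_sq_to_K]; norm_cast

lemma sub_Pz_eq_smul : z - Pz z w = (1 - hin w z / hin z z) • z := by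
  rw [Pz, sub_smul, one_smul]

lemma norm_one_sub_hin_pos {z w : EuclideanSpace ℂ (Fin n)} (hz : ‖z‖ < 1) (hw : ‖w‖ < 1) :
    0 < ‖1 - hin z w‖ := by
  have hlt : ‖hin z w‖ < 1 := by
    rw [hin_eq_inner]
    exact (norm_inner_le_norm _ _).trans_lt (by nlinarith [norm_nonneg z, norm_nonneg w])
  have h := norm_sub_norm_le (1 : ℂ) (hin z w)
  rw [norm_one] at h
  linarith

lemma norm_sub_sq_le_two_mul_norm_one_sub_hin (hz : ‖z‖ ≤ 1) (hw : ‖w‖ ≤ 1) :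
    ‖w - z‖ ^ 2 ≤ 2 * ‖1 - hin z w‖ := by
  have hre : 1 - (⟪w, z⟫).re ≤ ‖1 - hin z w‖ := by
    simpa [hin_eq_inner] using Complex.re_le_norm (1 - hin z w)
  rw [norm_sub_sq (𝕜 := ℂ)]
  simp only [RCLike.re_to_complex]
  nlinarith [norm_nonneg z, norm_nonneg w]

variable {z}

lemma inner_Qz_eq_zero (hz : z ≠ 0) : ⟪z, Qz z w⟫ = 0 := by
  have hzz : hin z z ≠ 0 := by
    rw [hin_self]
    exact_mod_cast pow_ne_zero 2 (norm_ne_zero_iff.2 hz)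
  rw [Qz, Pz, inner_sub_right, inner_smul_right, ← hin_eq_inner, ← hin_eq_inner,
    div_mul_cancel₀ _ hzz, sub_self]

lemma inner_sub_Pz_Qz (hz : z ≠ 0) : ⟪z - Pz z w, Qz z w⟫ = 0 := by
  rw [sub_Pz_eq_smul, inner_smul_left, inner_Qz_eq_zero w hz, mul_zero]

lemma norm_Qz_sq_le_two_mul (hz0 : z ≠ 0) (hz : ‖z‖ ≤ 1) (hw : ‖w‖ ≤ 1) :
    ‖Qz z w‖ ^ 2 ≤ 2 * ‖1 - hin z w‖ := by
  have hwz : w - z = Qz z w - (z - Pz z w) := by rw [Qz]; abel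
  have hpyth : ‖w - z‖ ^ 2 = ‖Qz z w‖ ^ 2 + ‖z - Pz z w‖ ^ 2 := by
    rw [hwz, norm_sub_sq_eq_of_inner_eq_zero (𝕜 := ℂ)]
    rw [← inner_conj_symm, inner_sub_Pz_Qz w hz0, map_zero]
  nlinarith [norm_sub_sq_le_two_mul_norm_one_sub_hin z w hz hw, sq_nonneg ‖z - Pz z w‖]

lemma norm_mobius_sq (hz0 : z ≠ 0) (hz : ‖z‖ ≤ 1) :
    ‖mobius z w‖ ^ 2 =
      (‖z - Pz z w‖ ^ 2 + (1 - ‖z‖ ^ 2) * ‖Qz z w‖ ^ 2) / ‖1 - hin w z‖ ^ 2 := by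
  have hε : 0 ≤ 1 - ‖z‖ ^ 2 := by nlinarith [norm_nonneg z]
  have horth : ⟪z - Pz z w, (Real.sqrt (1 - ‖z‖ ^ 2) : ℂ) • Qz z w⟫ = 0 := by
    rw [inner_smul_right, inner_sub_Pz_Qz w hz0, mul_zero]
  rw [mobius, if_neg hz0, norm_smul, norm_inv, mul_pow, norm_sub_sq_eq_of_inner_eq_zero horth,
    norm_smul, Complex.norm_real, Real.norm_of_nonneg (Real.sqrt_nonneg _), mul_pow,
    Real.sq_sqrt hε, inv_pow, inv_mul_eq_div]

lemma norm_one_sub_hin_le (hz0 : z ≠ 0) (hz : ‖z‖ ≤ 1) :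
    ‖1 - hin w z‖ ≤ (1 - ‖z‖ ^ 2) + ‖z - Pz z w‖ := by
  have hsplit : 1 - hin w z = ((1 - ‖z‖ ^ 2 : ℝ) : ℂ) + ⟪z, z - Pz z w⟫ := by
    have h := inner_Qz_eq_zero w hz0
    rw [Qz, inner_sub_right, sub_eq_zero] at h
    rw [inner_sub_right, ← h, ← hin_eq_inner, ← hin_eq_inner, hin_self]
    push_cast; ring
  have hε : 0 ≤ 1 - ‖z‖ ^ 2 := by nlinarith [norm_nonneg z]
  calc ‖1 - hin w z‖ ≤ ‖((1 - ‖z‖ ^ 2 : ℝ) : ℂ)‖ + ‖⟪z, z - Pz z w⟫‖ := by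
        rw [hsplit]; exact norm_add_le _ _
    _ ≤ (1 - ‖z‖ ^ 2) + 1 * ‖z - Pz z w‖ := by
        rw [Complex.norm_real, Real.norm_of_nonneg hε]
        gcongr
        exact (norm_inner_le_norm _ _).trans (by gcongr)
    _ = (1 - ‖z‖ ^ 2) + ‖z - Pz z w‖ := by rw [one_mul]

end Mobius

theorem stmt_7 (n : ℕ) :
    ∃ C : ℝ, 0 < C ∧ ∀ z w : EuclideanSpace ℂ (Fin n), ‖z‖ < 1 → ‖w‖ < 1 → z ≠ 0 →
      ‖Qz z w‖ ≤ C * ‖mobius z w‖ * Real.sqrt (‖1 - hin z w‖) := by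
  refine ⟨2, two_pos, fun z w hz hw hz0 => ?_⟩
  have hD := norm_one_sub_hin_pos hw hz
  have key : ‖Qz z w‖ ^ 2 * ‖1 - hin w z‖ ≤
      4 * (‖z - Pz z w‖ ^ 2 + (1 - ‖z‖ ^ 2) * ‖Qz z w‖ ^ 2) :=
    sq_mul_le_four_mul_of_le_add (norm_nonneg _) (by nlinarith [norm_nonneg z])
      (norm_one_sub_hin_le w hz0 hz.le)
      ((norm_Qz_sq_le_two_mul w hz0 hz.le hw.le).trans_eq (by rw [norm_one_sub_hin_comm]))
  rw [norm_one_sub_hin_comm]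
  refine le_of_pow_le_pow_left₀ two_ne_zero (by positivity) ?_
  rw [mul_pow, mul_pow, Real.sq_sqrt hD.le, norm_mobius_sq w hz0 hz.le]
  calc ‖Qz z w‖ ^ 2 = ‖Qz z w‖ ^ 2 * ‖1 - hin w z‖ / ‖1 - hin w z‖ := by field_simp
    _ ≤ 4 * (‖z - Pz z w‖ ^ 2 + (1 - ‖z‖ ^ 2) * ‖Qz z w‖ ^ 2) / ‖1 - hin w z‖ := by gcongr
    _ = _ := by field_simp; ring
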